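/- arXiv:1411.4835 — 3 statements merged into one kernel-verified Lean document; each statement's English description precedes it below -/
import Mathlib

section
/- Let n ∈ ℕ and let S ⊆ {1,…,2n} satisfy the ballot condition. For every m ∈ ℕ set S_m = S ∪ {2n+2, 2n+4, …, 2n+2m} ⊆ {1,…,2n+2m} (the m-fold iterate of the serpentine embedding applied to S). Then each S_m satisfies the ballot condition and, as integers, (n+m)² − maj(S_m) = n² − maj(S). (Hence the stable major index r(τ) = lim_{n→∞} (n² − maj([τ]_{2n})) of an infinite serpentine tableau τ is well defined: the quantity n² − maj([τ]_{2n}) is eventually constant along the chain of serpentine embeddings.) -/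
/-!
One serpentine step `T ↦ insert (N + 2) T` on a ballot set `T ⊆ {1,…,N}` keeps the ballot
condition (the only new constraint, at `N + 2`, is `2·|T| ≤ N`) and creates exactly one new
descent, at `N + 1`. For `N = 2k` this raises `maj` by `2k + 1 = (k + 1)² − k²`, so `k² − maj`
is unchanged.
-/

/-- The ballot condition: `S ⊆ {1,…,N}` encodes the second row of a standard
Young tableau with at most two rows and `N` cells iff
`2·|S ∩ {1,…,m}| ≤ m` for every `m ∈ {1,…,N}`. -/
def IsBallot (N : ℕ) (S : Finset ℕ) : Prop :=
  S ⊆ Finset.Icc 1 N ∧ ∀ m ∈ Finset.Icc 1 N, 2 * (S ∩ Finset.Icc 1 m).card ≤ m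

/-- The descent set `des(S) = {i ∈ {1,…,N−1} : i ∉ S and i+1 ∈ S}`. -/
def desSet (N : ℕ) (S : Finset ℕ) : Finset ℕ :=
  (Finset.Icc 1 (N - 1)).filter fun i => i ∉ S ∧ i + 1 ∈ S

/-- The major index `maj(S) = Σ_{i ∈ des(S)} i`. -/
def maj (N : ℕ) (S : Finset ℕ) : ℕ := ∑ i ∈ desSet N S, i

namespace IsBallot

variable {N : ℕ} {T : Finset ℕ}

lemma le_of_mem (h : IsBallot N T) {x : ℕ} (hx : x ∈ T) : x ≤ N :=
  (Finset.mem_Icc.mp (h.1 hx)).2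

lemma two_mul_card_le (h : IsBallot N T) : 2 * T.card ≤ N := by
  obtain ⟨hsub, hball⟩ := h
  rcases Nat.eq_zero_or_pos N with rfl | hN
  · simp [Finset.subset_empty.mp (by simpa using hsub)]
  · simpa [Finset.inter_eq_left.mpr hsub] using hball N (by simp; omega)

lemma insert_add_two (h : IsBallot N T) : IsBallot (N + 2) (insert (N + 2) T) := by
  have hcard := h.two_mul_card_le
  have hle : ∀ x ∈ T, x ≤ N := fun _ => h.le_of_mem
  obtain ⟨hsub, hball⟩ := h
  refine ⟨Finset.insert_subset (by simp) (hsub.trans (Finset.Icc_subset_Icc_right (by omega))),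
    fun m hm => ?_⟩
  rw [Finset.mem_Icc] at hm
  by_cases hmN : m ≤ N
  · rw [Finset.insert_inter_of_notMem (by simp; omega)]
    exact hball m (Finset.mem_Icc.mpr ⟨hm.1, hmN⟩)
  have hT : T ∩ Finset.Icc 1 m = T :=
    Finset.inter_eq_left.mpr fun x hx => Finset.mem_Icc.mpr ⟨(Finset.mem_Icc.mp (hsub hx)).1,
      by have := hle x hx; omega⟩
  by_cases hm2 : m = N + 2
  · subst hm2
    rw [Finset.insert_inter_of_mem (by simp), hT]
    have := Finset.card_insert_le (N + 2) T
    omega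
  · rw [Finset.insert_inter_of_notMem (by simp; omega), hT]
    omega

end IsBallot

lemma desSet_insert_add_two {N : ℕ} {T : Finset ℕ} (hT : ∀ x ∈ T, x ≤ N) :
    desSet (N + 2) (insert (N + 2) T) = insert (N + 1) (desSet N T) := by
  ext i
  simp only [desSet, Finset.mem_filter, Finset.mem_Icc, Finset.mem_insert]
  constructor
  · rintro ⟨⟨h1, h2⟩, hi, hi1 | hi1⟩
    · omega
    · have := hT _ hi1
      exact Or.inr ⟨⟨h1, by omega⟩, fun h => hi (Or.inr h), hi1⟩
  · rintro (rfl | ⟨⟨h1, h2⟩, hi, hi1⟩)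
    · exact ⟨⟨by omega, by omega⟩, by rintro (h | h) <;> [omega; exact absurd (hT _ h) (by omega)],
        Or.inl rfl⟩
    · exact ⟨⟨h1, by omega⟩, by rintro (h | h) <;> [omega; exact hi h], Or.inr hi1⟩

lemma maj_insert_add_two {N : ℕ} {T : Finset ℕ} (hT : ∀ x ∈ T, x ≤ N) :
    maj (N + 2) (insert (N + 2) T) = (N + 1) + maj N T := by
  rw [maj, desSet_insert_add_two hT, Finset.sum_insert, maj]
  intro h
  have := (Finset.mem_Icc.mp (Finset.mem_filter.mp h).1).2
  omega

lemma union_image_Icc_add_one (S : Finset ℕ) (f : ℕ → ℕ) (m : ℕ) :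
    S ∪ (Finset.Icc 1 (m + 1)).image f = insert (f (m + 1)) (S ∪ (Finset.Icc 1 m).image f) := by
  rw [← Finset.insert_Icc_right_eq_Icc_add_one (by omega), Finset.image_insert,
    Finset.union_insert]

/-- Iterating the serpentine embedding `m` times starting from a ballot set
`S ⊆ {1,…,2n}` yields the ballot set
`S_m = S ∪ {2n+2, 2n+4, …, 2n+2m} ⊆ {1,…,2n+2m}`, and the integer
`(n+m)² − maj(S_m)` does not depend on `m`: it equals `n² − maj(S)`.
Hence the stable major index of an infinite serpentine tableau is well
defined. -/
theorem stable_major_index_well_defined (n : ℕ) (S : Finset ℕ)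
    (hS : IsBallot (2 * n) S) (m : ℕ) :
    IsBallot (2 * n + 2 * m)
        (S ∪ (Finset.Icc 1 m).image fun j => 2 * n + 2 * j) ∧
      ((n + m : ℤ) ^ 2 -
          (maj (2 * n + 2 * m)
            (S ∪ (Finset.Icc 1 m).image fun j => 2 * n + 2 * j) : ℤ)) =
        (n : ℤ) ^ 2 - (maj (2 * n) S : ℤ) := by
  induction m with
  | zero => simpa using hS
  | succ m ih =>
    obtain ⟨hBallot, hMaj⟩ := ih
    rw [union_image_Icc_add_one, show 2 * n + 2 * (m + 1) = 2 * n + 2 * m + 2 by ring]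
    refine ⟨hBallot.insert_add_two, ?_⟩
    rw [maj_insert_add_two fun _ => hBallot.le_of_mem]
    push_cast
    linear_combination hMaj
end

section
/- Let 0 ≤ k ≤ n be integers and let S ⊆ {1,…,2n} satisfy the ballot condition with |S| = n−k (so S encodes a standard Young tableau of shape (n+k, n−k)). Then maj(S) ≤ n² − k², and equality holds if and only if S = {2k+2, 2k+4, …, 2n}. (Equivalently: among two-row standard Young tableaux of shape (n+k, n−k), the major index is at most n² − k², with the maximum attained exactly at the truncated principal tableau [τ_k]_{2n}; on the level of stable major indices, r(τ) ≥ k² for every infinite tableau τ tail-equivalent to τ_k, with equality only for τ = τ_k.) -/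
/-!
The descents of `S` form a set `D ⊆ [1, 2n - 1]` without two consecutive elements (if `d` is a
descent then `d + 1 ∈ S`), and `d ↦ d + 1` embeds `D` into `S`, so `t := |D| ≤ n - k`. Such a set
has sum at most `(2n - 1) + (2n - 3) + ⋯ + (2n - 2t + 1) = 2nt - t²`, with equality only for these
top odd numbers: its maximum is at most `2n - 1` and the rest lies below `2n - 2`. Finally
`2nt - t² = n² - k² - ((n - t)² - k²) ≤ n² - k²`, and equality forces `t = n - k`, hence
`S = D + 1 = {2k + 2, …, 2n}`.
-/

open Finset

/-- `{2n - 1, 2n - 3, …, 2n - 2t + 1}` when `t ≤ n`. -/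
def topOdds (n t : ℕ) : Finset ℕ := (Icc (n + 1 - t) n).image fun j => 2 * j - 1

lemma topOdds_succ_succ (n t : ℕ) :
    topOdds (n + 1) (t + 1) = insert (2 * n + 1) (topOdds n t) := by
  rw [topOdds, topOdds, show n + 1 + 1 - (t + 1) = n + 1 - t by omega,
    ← insert_Icc_right_eq_Icc_add_one (by omega), image_insert]
  congr 1

lemma topOdds_zero_right (n : ℕ) : topOdds n 0 = ∅ := by
  simp [topOdds]

lemma le_of_mem_topOdds {n t x : ℕ} (hx : x ∈ topOdds n t) : x ≤ 2 * n - 1 := by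
  obtain ⟨j, hj, rfl⟩ := mem_image.mp hx
  have := (mem_Icc.mp hj).2
  omega

lemma sum_topOdds_add_sq {n t : ℕ} (h : t ≤ n) :
    ∑ x ∈ topOdds n t, x + t ^ 2 = 2 * n * t := by
  induction n generalizing t with
  | zero => simp [Nat.le_zero.mp h, topOdds_zero_right]
  | succ n ih =>
    cases t with
    | zero => simp [topOdds_zero_right]
    | succ t =>
      rw [topOdds_succ_succ, sum_insert fun h => by have := le_of_mem_topOdds h; omega]
      have := ih (by omega : t ≤ n)
      nlinarith

lemma forall_lt_of_insert_max {a m : ℕ} {s : Finset ℕ} (hmax : ∀ x ∈ s, x < a)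
    (ha : a < 2 * (m + 1)) (hsep : ∀ x ∈ insert a s, x + 1 ∉ insert a s) :
    ∀ x ∈ s, x < 2 * m := by
  intro x hx
  have hxa : x + 1 ≠ a := fun h => hsep x (mem_insert_of_mem hx) (h ▸ mem_insert_self a s)
  have := hmax x hx
  omega

lemma sum_add_card_sq_le {D : Finset ℕ} {n : ℕ} (hlt : ∀ x ∈ D, x < 2 * n)
    (hsep : ∀ x ∈ D, x + 1 ∉ D) : ∑ x ∈ D, x + #D ^ 2 ≤ 2 * n * #D := by
  induction D using Finset.induction_on_max generalizing n with
  | empty => simp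
  | insert a s hmax ih =>
    have ha := hlt a (mem_insert_self a s)
    obtain ⟨m, rfl⟩ : ∃ m, n = m + 1 := ⟨n - 1, by omega⟩
    have hs := ih (forall_lt_of_insert_max hmax ha hsep)
      fun x hx h => hsep x (mem_insert_of_mem hx) (mem_insert_of_mem h)
    have ha_notMem : a ∉ s := fun h => (hmax a h).false
    rw [sum_insert ha_notMem, card_insert_of_notMem ha_notMem]
    nlinarith

lemma eq_topOdds_of_sum_add_card_sq_eq {D : Finset ℕ} {n : ℕ} (hlt : ∀ x ∈ D, x < 2 * n)
    (hsep : ∀ x ∈ D, x + 1 ∉ D) (heq : ∑ x ∈ D, x + #D ^ 2 = 2 * n * #D) :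
    D = topOdds n #D := by
  induction D using Finset.induction_on_max generalizing n with
  | empty => simp [topOdds_zero_right]
  | insert a s hmax ih =>
    have ha := hlt a (mem_insert_self a s)
    obtain ⟨m, rfl⟩ : ∃ m, n = m + 1 := ⟨n - 1, by omega⟩
    have hs_lt := forall_lt_of_insert_max hmax ha hsep
    have hs_sep : ∀ x ∈ s, x + 1 ∉ s :=
      fun x hx h => hsep x (mem_insert_of_mem hx) (mem_insert_of_mem h)
    have hs := sum_add_card_sq_le hs_lt hs_sep
    have ha_notMem : a ∉ s := fun h => (hmax a h).false
    rw [sum_insert ha_notMem, card_insert_of_notMem ha_notMem] at heq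
    have ha_eq : a = 2 * m + 1 := by nlinarith
    have hs_eq : ∑ x ∈ s, x + #s ^ 2 = 2 * m * #s := by nlinarith
    rw [card_insert_of_notMem ha_notMem, topOdds_succ_succ, ha_eq, ← ih hs_lt hs_sep hs_eq]

lemma mem_desSet {N : ℕ} {S : Finset ℕ} {d : ℕ} :
    d ∈ desSet N S ↔ (1 ≤ d ∧ d ≤ N - 1) ∧ d ∉ S ∧ d + 1 ∈ S := by
  simp [desSet]

lemma lt_of_mem_desSet {N : ℕ} {S : Finset ℕ} {d : ℕ} (hd : d ∈ desSet N S) : d < N := by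
  have := (mem_desSet.mp hd).1
  omega

lemma succ_notMem_desSet {N : ℕ} {S : Finset ℕ} {d : ℕ} (hd : d ∈ desSet N S) :
    d + 1 ∉ desSet N S :=
  fun h => (mem_desSet.mp h).2.1 (mem_desSet.mp hd).2.2

lemma image_succ_desSet_subset (N : ℕ) (S : Finset ℕ) : (desSet N S).image (· + 1) ⊆ S := by
  intro x hx
  obtain ⟨d, hd, rfl⟩ := mem_image.mp hx
  exact (mem_desSet.mp hd).2.2

lemma card_image_succ (D : Finset ℕ) : #(D.image (· + 1)) = #D :=
  card_image_of_injective _ (add_left_injective 1)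

lemma image_succ_topOdds {n t : ℕ} (h : t ≤ n) :
    (topOdds n t).image (· + 1) = (Icc (n + 1 - t) n).image (2 * ·) := by
  rw [topOdds, image_image]
  refine image_congr fun j hj => ?_
  have := (mem_Icc.mp hj).1
  simp only [Function.comp_apply]
  omega

lemma desSet_image_two_mul (k n : ℕ) :
    desSet (2 * n) ((Icc (k + 1) n).image (2 * ·)) = topOdds n (n - k) := by
  ext x
  simp only [mem_desSet, topOdds, mem_image, mem_Icc]
  constructor
  · rintro ⟨-, -, j, hj, hjx⟩
    exact ⟨j, by omega, by omega⟩
  · rintro ⟨j, hj, rfl⟩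
    exact ⟨by omega, fun ⟨i, hi, hij⟩ => by omega, j, by omega, by omega⟩

lemma maj_image_two_mul {k n : ℕ} (hkn : k ≤ n) :
    (maj (2 * n) ((Icc (k + 1) n).image (2 * ·)) : ℤ) = (n : ℤ) ^ 2 - (k : ℤ) ^ 2 := by
  have hsum := sum_topOdds_add_sq (Nat.sub_le n k)
  rw [maj, desSet_image_two_mul]
  zify [hkn] at hsum
  push_cast
  linear_combination hsum

theorem maj_le_of_shape_general (k n : ℕ) (hkn : k ≤ n) (S : Finset ℕ)
    (hcard : S.card = n - k) :
    (maj (2 * n) S : ℤ) ≤ (n : ℤ) ^ 2 - (k : ℤ) ^ 2 ∧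
      ((maj (2 * n) S : ℤ) = (n : ℤ) ^ 2 - (k : ℤ) ^ 2 ↔
        S = (Finset.Icc (k + 1) n).image fun j => 2 * j) := by
  set D := desSet (2 * n) S
  have hlt : ∀ x ∈ D, x < 2 * n := fun _ => lt_of_mem_desSet
  have hsep : ∀ x ∈ D, x + 1 ∉ D := fun _ => succ_notMem_desSet
  have hsub : D.image (· + 1) ⊆ S := image_succ_desSet_subset (2 * n) S
  have hcardD : #D + k ≤ n := by
    have := card_le_card hsub
    rw [card_image_succ, hcard] at this
    omega
  have hbound : (maj (2 * n) S : ℤ) + #D ^ 2 ≤ 2 * n * #D := by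
    exact_mod_cast sum_add_card_sq_le hlt hsep
  zify at hcardD
  have hk : (0 : ℤ) ≤ k := Int.natCast_nonneg k
  refine ⟨by nlinarith, fun heq => ?_, fun hST => hST ▸ maj_image_two_mul hkn⟩
  have htk : (#D : ℤ) + k = n := by
    have : ((n : ℤ) - #D - k) ^ 2 ≤ 0 := by nlinarith
    nlinarith
  have hD : D = topOdds n #D := eq_topOdds_of_sum_add_card_sq_eq hlt hsep (by
    have : (maj (2 * n) S : ℤ) + #D ^ 2 = 2 * n * #D := by
      linear_combination heq + ((#D : ℤ) - k - n) * htk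
    exact_mod_cast this)
  have himage : D.image (· + 1) = S :=
    eq_of_subset_of_card_le hsub (by rw [card_image_succ, hcard]; omega)
  rw [← himage, hD, image_succ_topOdds (by omega), show n + 1 - #D = k + 1 by omega]

/-- Among two-row standard Young tableaux of shape `(n+k, n−k)` (encoded by
ballot sets `S ⊆ {1,…,2n}` with `|S| = n−k`), the major index is at most
`n² − k²`, with equality exactly for the truncated principal tableau
`[τ_k]_{2n}`, encoded by `{2k+2, 2k+4, …, 2n}`. -/
theorem maj_le_of_shape (k n : ℕ) (hkn : k ≤ n) (S : Finset ℕ)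
    (hS : IsBallot (2 * n) S) (hcard : S.card = n - k) :
    (maj (2 * n) S : ℤ) ≤ (n : ℤ) ^ 2 - (k : ℤ) ^ 2 ∧
      ((maj (2 * n) S : ℤ) = (n : ℤ) ^ 2 - (k : ℤ) ^ 2 ↔
        S = (Finset.Icc (k + 1) n).image fun j => 2 * j) :=
  maj_le_of_shape_general k n hkn S hcard
end

section
/- For all k, m ∈ ℕ there exists N₀ ∈ ℕ such that for every n ≥ N₀, the number of sets S ⊆ {1,…,2n} satisfying the ballot condition with |S| = n−k and maj(S) = n² − k² − m equals p(m) − p(m − (2k+1)), where p(j) denotes the number of partitions of j (with p(j) = 0 for j < 0). In other words, the number of two-row standard Young tableaux of shape (n+k, n−k) whose major index equals n² − k² − m stabilizes for large n to p(m) − p(m − (2k+1)). -/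
open scoped Classical
open Polynomial Finset

/-- `gaussBinom a b` is the Gaussian binomial coefficient `[a + b choose a]_q`. -/
noncomputable def gaussBinom : ℕ → ℕ → ℤ[X]
  | 0, _ => 1
  | _ + 1, 0 => 1
  | a + 1, b + 1 => gaussBinom (a + 1) b + X ^ (b + 1) * gaussBinom a (b + 1)

namespace gaussBinom

@[simp] lemma zero_left (b : ℕ) : gaussBinom 0 b = 1 := by
  rw [gaussBinom]

@[simp] lemma zero_right (a : ℕ) : gaussBinom a 0 = 1 := by
  cases a <;> rw [gaussBinom]

lemma succ_succ (a b : ℕ) :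
    gaussBinom (a + 1) (b + 1) = gaussBinom (a + 1) b + X ^ (b + 1) * gaussBinom a (b + 1) := by
  rw [gaussBinom]

lemma one_succ (b : ℕ) : gaussBinom 1 (b + 1) = gaussBinom 1 b + X ^ (b + 1) := by
  simpa using succ_succ 0 b

lemma succ_one (a : ℕ) : gaussBinom (a + 1) 1 = 1 + X * gaussBinom a 1 := by
  simpa using succ_succ a 0

lemma succ_succ' (a b : ℕ) :
    gaussBinom (a + 1) (b + 1) = gaussBinom a (b + 1) + X ^ (a + 1) * gaussBinom (a + 1) b := by
  induction a generalizing b with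
  | zero =>
    induction b with
    | zero => simp [succ_succ]
    | succ b ih =>
      simp only [zero_add, zero_left, pow_one] at ih ⊢
      linear_combination one_succ (b + 1) + ih - X * one_succ b
  | succ a iha =>
    induction b with
    | zero =>
      have h := iha 0
      simp only [zero_add, zero_right, mul_one] at h ⊢
      linear_combination succ_one (a + 1) + X * h - succ_one a
    | succ b ihb =>
      linear_combination succ_succ (a + 1) (b + 1) + ihb + X ^ (b + 2) * iha (b + 1)
        - succ_succ a (b + 1) - X ^ (a + 2) * succ_succ (a + 1) b

lemma comm (a b : ℕ) : gaussBinom a b = gaussBinom b a := by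
  induction a generalizing b with
  | zero => simp
  | succ a iha =>
    induction b with
    | zero => simp
    | succ b ihb => rw [succ_succ, ihb, iha, succ_succ']

lemma X_pow_sub_one_mul_succ (a b : ℕ) :
    (X ^ (a + 1) - 1) * gaussBinom (a + 1) b = (X ^ (a + b + 1) - 1) * gaussBinom a b := by
  cases b with
  | zero => simp
  | succ b => linear_combination X ^ (a + 1) * succ_succ a b - succ_succ' a b

lemma recurrence (a b : ℕ) :
    gaussBinom (a + 1) (b + 1) + gaussBinom a b =
      gaussBinom (a + 1) b + gaussBinom a (b + 1) + X ^ (a + b + 1) * gaussBinom a b := by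
  linear_combination succ_succ' a b + X_pow_sub_one_mul_succ a b

lemma natDegree_le (a b : ℕ) : (gaussBinom a b).natDegree ≤ a * b := by
  induction a generalizing b with
  | zero => simp
  | succ a iha =>
    induction b with
    | zero => simp
    | succ b ihb =>
      rw [succ_succ]
      refine natDegree_add_le_of_degree_le (ihb.trans (by nlinarith)) ?_
      refine (natDegree_mul_le.trans (add_le_add (natDegree_X_pow_le _) (iha (b + 1)))).trans ?_
      nlinarith

lemma reflect_eq (a b : ℕ) : reflect (a * b) (gaussBinom a b) = gaussBinom a b := by
  induction a generalizing b with
  | zero => simp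
  | succ a iha =>
    induction b with
    | zero => simp
    | succ b ihb =>
      have h₁ : reflect ((a + 1) * (b + 1)) (gaussBinom (a + 1) b) =
          X ^ (a + 1) * gaussBinom (a + 1) b := by
        have h := reflect_mul 1 (gaussBinom (a + 1) b) (F := a + 1) (by simp) (natDegree_le _ _)
        rwa [one_mul, reflect_one, ihb, add_comm, ← mul_add_one] at h
      have h₂ : reflect ((a + 1) * (b + 1)) (X ^ (b + 1) * gaussBinom a (b + 1)) =
          gaussBinom a (b + 1) := by
        rw [show (a + 1) * (b + 1) = (b + 1) + a * (b + 1) by ring,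
          reflect_mul _ _ (natDegree_X_pow_le _) (natDegree_le _ _), iha, reflect_monomial,
          revAt_le le_rfl, Nat.sub_self, pow_zero, one_mul]
      conv_lhs => rw [succ_succ]
      rw [reflect_add, h₁, h₂, succ_succ' a b, add_comm]

lemma coeff_mul_sub (a b : ℕ) {j : ℕ} (hj : j ≤ a * b) :
    (gaussBinom a b).coeff (a * b - j) = (gaussBinom a b).coeff j := by
  conv_lhs => rw [← reflect_eq]
  rw [coeff_reflect, revAt_le (Nat.sub_le _ _), Nat.sub_sub_self hj]

end gaussBinom

def boxPartitions (a b j : ℕ) : Finset j.Partition :=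
  univ.filter fun p => Multiset.card p.parts ≤ a ∧ ∀ i ∈ p.parts, i ≤ b

lemma card_boxPartitions_of_eq_zero {a b : ℕ} (h : a = 0 ∨ b = 0) (j : ℕ) :
    #(boxPartitions a b j) = if j = 0 then 1 else 0 := by
  have hmem : ∀ p : j.Partition, p ∈ boxPartitions a b j ↔ j = 0 := by
    intro p
    simp only [boxPartitions, mem_filter, mem_univ, true_and]
    constructor
    · rintro ⟨hcard, hle⟩
      have hp : p.parts = 0 := by
        rcases h with rfl | rfl
        · exact Multiset.card_eq_zero.mp (Nat.le_zero.mp hcard)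
        · exact Multiset.eq_zero_of_forall_notMem fun i hi =>
            (p.parts_pos hi).ne' (Nat.le_zero.mp (hle i hi))
      simpa [hp] using p.parts_sum.symm
    · rintro rfl
      simp
  split_ifs with hj
  · subst hj
    rw [eq_univ_of_forall fun p => (hmem p).mpr rfl, card_univ, Fintype.card_unique]
  · exact card_eq_zero.mpr (eq_empty_of_forall_notMem fun p hp => hj ((hmem p).mp hp))

lemma card_boxPartitions_succ_succ (a b j : ℕ) :
    #(boxPartitions (a + 1) (b + 1) j) = #(boxPartitions (a + 1) b j) +
      if b + 1 ≤ j then #(boxPartitions a (b + 1) (j - (b + 1))) else 0 := by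
  rw [← card_filter_add_card_filter_not (p := fun p => b + 1 ∈ p.parts), add_comm]
  congr 1
  · congr 1
    ext p
    simp only [boxPartitions, mem_filter, mem_univ, true_and]
    constructor
    · rintro ⟨⟨hcard, hle⟩, hb⟩
      exact ⟨hcard, fun i hi => Nat.le_of_lt_succ <| (hle i hi).lt_of_ne fun h => hb (h ▸ hi)⟩
    · rintro ⟨hcard, hle⟩
      exact ⟨⟨hcard, fun i hi => (hle i hi).trans b.le_succ⟩, fun hb => by simpa using hle _ hb⟩
  split_ifs with hj
  · let e := Nat.Partition.partitionWithPartEquiv (Nat.succ_pos b) hj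
    refine card_bij' (fun p hp => e ⟨p, (mem_filter.mp hp).2⟩) (fun q _ => (e.symm q).1) ?_ ?_ ?_ ?_
    · intro p hp
      simp only [boxPartitions, mem_filter, mem_univ, true_and] at hp ⊢
      obtain ⟨⟨hcard, hle⟩, hb⟩ := hp
      have hpos := Multiset.card_pos_iff_exists_mem.mpr ⟨_, hb⟩
      simp only [e, Nat.Partition.partitionWithPartEquiv_apply_parts, Multiset.card_erase_of_mem hb,
        Nat.pred_eq_sub_one]
      exact ⟨by omega, fun i hi => hle i (Multiset.mem_of_mem_erase hi)⟩
    · intro q hq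
      simp only [boxPartitions, mem_filter, mem_univ, true_and] at hq ⊢
      simp only [e, Nat.Partition.partitionWithPartEquiv_symm_apply_parts, Multiset.card_cons,
        Multiset.mem_cons, forall_eq_or_imp]
      exact ⟨⟨by omega, le_rfl, hq.2⟩, Or.inl trivial⟩
    · intro p hp
      simp [e]
    · intro q hq
      simp [e]
  · refine card_eq_zero.mpr (eq_empty_of_forall_notMem fun p hp => hj ?_)
    exact Nat.Partition.le_of_mem_parts (mem_filter.mp hp).2

lemma coeff_gaussBinom (a b j : ℕ) : (gaussBinom a b).coeff j = #(boxPartitions a b j) := by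
  induction a generalizing b j with
  | zero => simp [card_boxPartitions_of_eq_zero, coeff_one]
  | succ a iha =>
    induction b generalizing j with
    | zero => simp [card_boxPartitions_of_eq_zero, coeff_one]
    | succ b ihb =>
      rw [gaussBinom.succ_succ, coeff_add, coeff_X_pow_mul', ihb, iha,
        card_boxPartitions_succ_succ]
      split_ifs <;> simp

lemma boxPartitions_eq_univ {a b j : ℕ} (ha : j ≤ a) (hb : j ≤ b) :
    boxPartitions a b j = univ := by
  refine filter_true_of_mem fun p _ => ⟨?_, fun i hi => (Nat.Partition.le_of_mem_parts hi).trans hb⟩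
  have h := Multiset.card_nsmul_le_sum (a := 1) fun i hi => p.parts_pos hi
  rw [p.parts_sum, smul_eq_mul, mul_one] at h
  exact h.trans ha

lemma coeff_gaussBinom_of_le {a b j : ℕ} (ha : j ≤ a) (hb : j ≤ b) :
    (gaussBinom a b).coeff j = Fintype.card j.Partition := by
  rw [coeff_gaussBinom, boxPartitions_eq_univ ha hb, card_univ]

lemma maj_succ (N : ℕ) (S : Finset ℕ) :
    maj (N + 1) S = maj N S + if N ∉ S ∧ N + 1 ∈ S then N else 0 := by
  simp only [maj, desSet, sum_filter, Nat.add_sub_cancel]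
  rcases N with _ | N
  · simp
  · rw [sum_Icc_succ_top (by omega), Nat.add_sub_cancel]

lemma maj_insert_of_lt {N x : ℕ} (h : N < x) (S : Finset ℕ) : maj N (insert x S) = maj N S := by
  simp only [maj, desSet]
  congr 1
  refine filter_congr fun i hi => ?_
  have := (mem_Icc.mp hi).2
  grind

lemma IsBallot.two_mul_card_le_s8 {N : ℕ} {S : Finset ℕ} (h : IsBallot N S) : 2 * #S ≤ N := by
  rcases N.eq_zero_or_pos with rfl | hN
  · simp [subset_empty.mp (by simpa using h.1)]
  · simpa [inter_eq_left.mpr h.1] using h.2 N (mem_Icc.mpr ⟨hN, le_rfl⟩)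

lemma isBallot_succ_iff {N : ℕ} {T : Finset ℕ} :
    IsBallot (N + 1) T ↔ IsBallot N (T.erase (N + 1)) ∧ T ⊆ Icc 1 (N + 1) ∧ 2 * #T ≤ N + 1 := by
  have herase : ∀ m ≤ N, T.erase (N + 1) ∩ Icc 1 m = T ∩ Icc 1 m := fun m hm => by
    ext x
    have : x ≤ m → x ≠ N + 1 := by omega
    simp only [mem_inter, mem_erase, mem_Icc]
    tauto
  constructor
  · intro h
    refine ⟨⟨fun x hx => ?_, fun m hm => ?_⟩, h.1, h.two_mul_card_le_s8⟩
    · have := mem_Icc.mp (h.1 (mem_of_mem_erase hx))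
      exact mem_Icc.mpr ⟨this.1, by have := ne_of_mem_erase hx; omega⟩
    · rw [herase m (mem_Icc.mp hm).2]
      exact h.2 m (Icc_subset_Icc_right N.le_succ hm)
  · rintro ⟨hB, hsub, hcard⟩
    refine ⟨hsub, fun m hm => ?_⟩
    rcases (mem_Icc.mp hm).2.lt_or_eq with hlt | rfl
    · rw [← herase m (by omega)]
      exact hB.2 m (mem_Icc.mpr ⟨(mem_Icc.mp hm).1, by omega⟩)
    · rwa [inter_eq_left.mpr hsub]

/-- The ballot sets encoding standard tableaux of shape `(N - c, c)`. -/
noncomputable def ballotSets (N c : ℕ) : Finset (Finset ℕ) :=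
  (Icc 1 N).powerset.filter fun S => IsBallot N S ∧ #S = c

lemma mem_ballotSets {N c : ℕ} {S : Finset ℕ} : S ∈ ballotSets N c ↔ IsBallot N S ∧ #S = c := by
  simp only [ballotSets, mem_filter, mem_powerset, and_iff_right_iff_imp]
  exact fun h => h.1.1

lemma succ_notMem_of_mem_ballotSets {N c : ℕ} {S : Finset ℕ} (h : S ∈ ballotSets N c) : N + 1 ∉ S :=
  fun hN => by simpa using (mem_ballotSets.mp h).1.1 hN

lemma ballotSets_zero (N : ℕ) : ballotSets N 0 = {∅} := by
  ext S
  simp only [mem_ballotSets, card_eq_zero, mem_singleton]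
  constructor
  · exact And.right
  · rintro rfl
    exact ⟨⟨empty_subset _, fun m _ => by simp⟩, rfl⟩

lemma ballotSets_eq_empty {N c : ℕ} (h : N < 2 * c) : ballotSets N c = ∅ :=
  eq_empty_of_forall_notMem fun S hS => by
    obtain ⟨hB, rfl⟩ := mem_ballotSets.mp hS
    exact absurd hB.two_mul_card_le_s8 (by omega)

lemma filter_notMem_ballotSets_succ (N c : ℕ) :
    (ballotSets (N + 1) c).filter (N + 1 ∉ ·) = ballotSets N c := by
  ext S
  simp only [mem_filter, mem_ballotSets]
  constructor
  · rintro ⟨⟨hB, hc⟩, hN⟩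
    exact ⟨by simpa [erase_eq_of_notMem hN] using (isBallot_succ_iff.mp hB).1, hc⟩
  · rintro ⟨hB, hc⟩
    have hN : N + 1 ∉ S := succ_notMem_of_mem_ballotSets (mem_ballotSets.mpr ⟨hB, hc⟩)
    refine ⟨⟨isBallot_succ_iff.mpr ⟨by rwa [erase_eq_of_notMem hN], ?_, ?_⟩, hc⟩, hN⟩
    · exact hB.1.trans (Icc_subset_Icc_right N.le_succ)
    · exact hB.two_mul_card_le_s8.trans N.le_succ

lemma filter_mem_ballotSets_succ {N c : ℕ} (h : 2 * (c + 1) ≤ N + 1) :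
    (ballotSets (N + 1) (c + 1)).filter (N + 1 ∈ ·) = (ballotSets N c).image (insert (N + 1)) := by
  ext T
  simp only [mem_filter, mem_image, mem_ballotSets]
  constructor
  · rintro ⟨⟨hB, hc⟩, hN⟩
    refine ⟨T.erase (N + 1), ⟨(isBallot_succ_iff.mp hB).1, ?_⟩, insert_erase hN⟩
    rw [card_erase_of_mem hN, hc, Nat.add_sub_cancel]
  · rintro ⟨S, ⟨hB, rfl⟩, rfl⟩
    have hN : N + 1 ∉ S := succ_notMem_of_mem_ballotSets (mem_ballotSets.mpr ⟨hB, rfl⟩)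
    refine ⟨⟨isBallot_succ_iff.mpr ⟨by rwa [erase_insert hN], ?_, ?_⟩, card_insert_of_notMem hN⟩,
      mem_insert_self _ _⟩
    · exact insert_subset (by simp) (hB.1.trans (Icc_subset_Icc_right N.le_succ))
    · rwa [card_insert_of_notMem hN]

noncomputable def majPoly (N c : ℕ) : ℤ[X] := ∑ S ∈ ballotSets N c, X ^ maj N S

lemma coeff_majPoly (N c M : ℕ) :
    (majPoly N c).coeff M = #((ballotSets N c).filter (maj N · = M)) := by
  simp [majPoly, finsetSum_coeff, coeff_X_pow, eq_comm]

lemma majPoly_zero (N : ℕ) : majPoly N 0 = 1 := by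
  simp [majPoly, ballotSets_zero, maj, desSet]

lemma majPoly_eq_zero {N c : ℕ} (h : N < 2 * c) : majPoly N c = 0 := by
  simp [majPoly, ballotSets_eq_empty h]

lemma sum_filter_notMem_ballotSets_succ (N c : ℕ) :
    ∑ S ∈ (ballotSets (N + 1) c).filter (N + 1 ∉ ·), (X : ℤ[X]) ^ maj (N + 1) S = majPoly N c := by
  rw [filter_notMem_ballotSets_succ, majPoly]
  refine sum_congr rfl fun S hS => ?_
  rw [maj_succ, if_neg fun h => succ_notMem_of_mem_ballotSets hS h.2, add_zero]

lemma majPoly_succ_succ {N c : ℕ} (h : 2 * (c + 1) ≤ N + 1) :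
    majPoly (N + 1) (c + 1) =
      majPoly N (c + 1) + ∑ S ∈ ballotSets N c, X ^ (maj N S + if N ∈ S then 0 else N) := by
  rw [majPoly, ← sum_filter_add_sum_filter_not _ (N + 1 ∈ ·), sum_filter_notMem_ballotSets_succ,
    filter_mem_ballotSets_succ h, sum_image, add_comm]
  · congr 1
    refine sum_congr rfl fun S hS => ?_
    rw [maj_succ, maj_insert_of_lt N.lt_succ_self]
    by_cases hNS : N ∈ S <;> simp [hNS]
  · intro S hS T hT hST
    simpa [erase_insert (succ_notMem_of_mem_ballotSets hS),
      erase_insert (succ_notMem_of_mem_ballotSets hT)] using congrArg (·.erase (N + 1)) hST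

lemma sum_ballotSets_X_pow_maj_add (N c : ℕ) :
    ∑ S ∈ ballotSets (N + 1) c, X ^ (maj (N + 1) S + if N + 1 ∈ S then 0 else N + 1) =
      majPoly (N + 1) c + (X ^ (N + 1) - 1) * majPoly N c := by
  rw [← sum_filter_notMem_ballotSets_succ N c, majPoly,
    ← sum_filter_add_sum_filter_not _ (N + 1 ∈ ·),
    ← sum_filter_add_sum_filter_not (ballotSets (N + 1) c) (N + 1 ∈ ·), mul_sum]
  have hmem : ∀ S ∈ (ballotSets (N + 1) c).filter (N + 1 ∈ ·),
      (X : ℤ[X]) ^ (maj (N + 1) S + if N + 1 ∈ S then 0 else N + 1) = X ^ maj (N + 1) S :=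
    fun S hS => by rw [if_pos (mem_filter.mp hS).2, add_zero]
  have hnot : ∀ S ∈ (ballotSets (N + 1) c).filter (N + 1 ∉ ·),
      (X : ℤ[X]) ^ (maj (N + 1) S + if N + 1 ∈ S then 0 else N + 1) =
        X ^ maj (N + 1) S + (X ^ (N + 1) - 1) * X ^ maj (N + 1) S :=
    fun S hS => by rw [if_neg (mem_filter.mp hS).2, pow_add]; ring
  rw [sum_congr rfl hmem, sum_congr rfl hnot, sum_add_distrib]
  ring

lemma majPoly_recurrence {n c : ℕ} (h : 2 * (c + 1) ≤ n + 2) :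
    majPoly (n + 2) (c + 1) =
      majPoly (n + 1) (c + 1) + majPoly (n + 1) c + (X ^ (n + 1) - 1) * majPoly n c := by
  rw [majPoly_succ_succ h, sum_ballotSets_X_pow_maj_add]
  ring

noncomputable def qBinom (N c : ℕ) : ℤ[X] := gaussBinom c (N - c)

@[simp] lemma qBinom_zero_right (N : ℕ) : qBinom N 0 = 1 := by
  simp [qBinom]

lemma qBinom_recurrence {n c : ℕ} (h : c ≤ n) :
    qBinom (n + 2) (c + 1) + qBinom n c =
      qBinom (n + 1) (c + 1) + qBinom (n + 1) c + X ^ (n + 1) * qBinom n c := by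
  obtain ⟨d, rfl⟩ := Nat.exists_eq_add_of_le h
  simp only [qBinom, show c + d + 2 - (c + 1) = d + 1 by omega,
    show c + d + 1 - (c + 1) = d by omega, show c + d + 1 - c = d + 1 by omega,
    Nat.add_sub_cancel_left]
  exact gaussBinom.recurrence c d

/-- The `q`-analogue of the number `C(N, c) - C(N, c - 1)` of standard tableaux of shape
`(N - c, c)`. -/
noncomputable def qBallot : ℕ → ℕ → ℤ[X]
  | _, 0 => 1
  | N, c + 1 => qBinom N (c + 1) - qBinom N c

lemma qBallot_recurrence {n c : ℕ} (h : 2 * (c + 1) ≤ n + 2) :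
    qBallot (n + 2) (c + 1) =
      qBallot (n + 1) (c + 1) + qBallot (n + 1) c + (X ^ (n + 1) - 1) * qBallot n c := by
  rcases c with _ | c
  · have hrec := qBinom_recurrence n.zero_le
    simp only [qBallot, qBinom_zero_right] at hrec ⊢
    linear_combination hrec
  · simp only [qBallot]
    linear_combination
      qBinom_recurrence (by omega : c + 1 ≤ n) - qBinom_recurrence (by omega : c ≤ n)

lemma qBallot_two_mul_add_one (c : ℕ) : qBallot (2 * c + 1) (c + 1) = 0 := by
  simp only [qBallot, qBinom, show 2 * c + 1 - (c + 1) = c by omega,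
    show 2 * c + 1 - c = c + 1 by omega, gaussBinom.comm c, sub_self]

theorem majPoly_eq_qBallot {N c : ℕ} (h : 2 * c ≤ N) : majPoly N c = qBallot N c := by
  induction N using Nat.strong_induction_on generalizing c with
  | _ N ih =>
    rcases c with _ | c
    · rw [majPoly_zero, qBallot]
    obtain ⟨n, rfl⟩ : ∃ n, N = n + 2 := ⟨N - 2, by omega⟩
    have htop : majPoly (n + 1) (c + 1) = qBallot (n + 1) (c + 1) := by
      by_cases hc : 2 * (c + 1) ≤ n + 1
      · exact ih _ (by omega) hc
      · obtain rfl : n = 2 * c := by omega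
        rw [majPoly_eq_zero (by omega), qBallot_two_mul_add_one]
    rw [majPoly_recurrence h, qBallot_recurrence h, htop, ih (n + 1) (by omega) (by omega),
      ih n (by omega) (by omega)]

lemma coeff_qBallot_of_le {b c j : ℕ} (hj : j ≤ c) (hcb : c < b) :
    (qBallot (c + 1 + b) (c + 1)).coeff ((c + 1) * b - j) =
      Fintype.card j.Partition -
        if b - c ≤ j then (Fintype.card (j - (b - c)).Partition : ℤ) else 0 := by
  simp only [qBallot, qBinom, show c + 1 + b - (c + 1) = b by omega,
    show c + 1 + b - c = b + 1 by omega, coeff_sub]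
  rw [gaussBinom.coeff_mul_sub _ _ (by nlinarith), coeff_gaussBinom_of_le (by omega) (by omega)]
  congr 1
  split_ifs with hjb
  · have hdeg : j - (b - c) ≤ c * (b + 1) :=
      (Nat.sub_le _ _).trans (hj.trans (Nat.le_mul_of_pos_right _ b.succ_pos))
    have hshift : (c + 1) * b - j = c * (b + 1) - (j - (b - c)) := by
      have : j ≤ (c + 1) * b := by nlinarith
      zify [this, hdeg, hjb, hcb.le]
      ring
    rw [hshift, gaussBinom.coeff_mul_sub _ _ hdeg, coeff_gaussBinom_of_le (by omega) (by omega)]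
  · refine coeff_eq_zero_of_natDegree_lt <| (gaussBinom.natDegree_le _ _).trans_lt ?_
    have : c + j < b := by omega
    exact lt_tsub_iff_right.mpr (by nlinarith)

/-- Stabilization of the major-index generating count: for fixed `k, m`, and
all sufficiently large `n`, the number of two-row standard Young tableaux of
shape `(n+k, n−k)` (i.e. ballot sets `S ⊆ {1,…,2n}` with `|S| = n−k`) whose
major index equals `n² − k² − m` is `p(m) − p(m − (2k+1))`, where `p` is the
partition function (with `p(j) = 0` for `j < 0`). -/
theorem maj_count_stabilizes (k m : ℕ) :
    ∃ N₀ : ℕ, ∀ n ≥ N₀,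
      (((Finset.Icc 1 (2 * n)).powerset.filter fun S =>
            IsBallot (2 * n) S ∧ S.card = n - k ∧
              (maj (2 * n) S : ℤ) = (n : ℤ) ^ 2 - (k : ℤ) ^ 2 - (m : ℤ)).card) =
        Fintype.card (Nat.Partition m) -
          (if 2 * k + 1 ≤ m then Fintype.card (Nat.Partition (m - (2 * k + 1))) else 0) := by
  refine ⟨m + k + 1, fun n hn => ?_⟩
  obtain ⟨c, rfl⟩ : ∃ c, n = c + k + 1 := ⟨n - k - 1, by omega⟩
  have hcoeff := coeff_qBallot_of_le (c := c) (b := c + 2 * k + 1) (j := m) (by omega) (by omega)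
  rw [← majPoly_eq_qBallot (by omega), coeff_majPoly, show c + 2 * k + 1 - c = 2 * k + 1 by omega,
    show c + 1 + (c + 2 * k + 1) = 2 * (c + k + 1) by ring] at hcoeff
  have hm : m ≤ (c + 1) * (c + 2 * k + 1) := by nlinarith
  calc _ = #((ballotSets (2 * (c + k + 1)) (c + 1)).filter
        (maj (2 * (c + k + 1)) · = (c + 1) * (c + 2 * k + 1) - m)) := by
        congr 1
        ext S
        simp only [mem_filter, mem_powerset, mem_ballotSets, show c + k + 1 - k = c + 1 by omega,
          ← Nat.cast_inj (R := ℤ), Nat.cast_sub hm]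
        push_cast
        constructor
        · rintro ⟨-, hB, hc, hmaj⟩
          exact ⟨⟨hB, hc⟩, by linarith⟩
        · rintro ⟨⟨hB, hc⟩, hmaj⟩
          exact ⟨hB.1, hB, hc, by linarith⟩
    _ = _ := by split_ifs at hcoeff ⊢ <;> omega
end
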